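/- Proposition 1 (Pruning is Worse under Noise), asymptotic directional form: suppose gᵗ = 0 (θ is a critical point of the clean loss), and let v ∈ E be a direction with ⟨gⁿ, v⟩ ≥ 0 and Bⁿ(v, v) − Bᵗ(v, v) > 0. Then there exists ε > 0 such that for every s with 0 < s < ε, the loss gap strictly increases after the pruning perturbation s·v: Δℒ(θ) < Δℒ(θ + s·v). -/

import Mathlib

/-! Along the ray `s ↦ θ + s • v` the loss gap has the one-variable expansion
`s ⟨gⁿ - gᵗ, v⟩ + (s² / 2) (Bⁿ(v, v) - Bᵗ(v, v)) + o(s²)`. With `gᵗ = 0` the linear term is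
nonnegative and the quadratic coefficient positive, so for small `s > 0` the quadratic term
beats the remainder. -/

open Asymptotics Filter
open scoped RealInnerProductSpace Topology

section SecondOrderExpansion

variable {E : Type*} [NormedAddCommGroup E] [InnerProductSpace ℝ E]

def HasSecondOrderExpansionAt (f : E → ℝ) (x g : E) (B : E →L[ℝ] E →L[ℝ] ℝ) : Prop :=
  (fun h => f (x + h) - f x - ⟪g, h⟫ - (1 / 2) * B h h) =o[𝓝 0] fun h => ‖h‖ ^ 2

theorem HasSecondOrderExpansionAt.sub {f₁ f₂ : E → ℝ} {x g₁ g₂ : E}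
    {B₁ B₂ : E →L[ℝ] E →L[ℝ] ℝ} (h₁ : HasSecondOrderExpansionAt f₁ x g₁ B₁)
    (h₂ : HasSecondOrderExpansionAt f₂ x g₂ B₂) :
    HasSecondOrderExpansionAt (f₁ - f₂) x (g₁ - g₂) (B₁ - B₂) := by
  refine (IsLittleO.sub h₁ h₂).congr_left fun h => ?_
  simp only [Pi.sub_apply, inner_sub_left, sub_apply]
  ring

theorem HasSecondOrderExpansionAt.comp_ray {f : E → ℝ} {x g : E} {B : E →L[ℝ] E →L[ℝ] ℝ}
    (hf : HasSecondOrderExpansionAt f x g B) (v : E) :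
    (fun s : ℝ => f (x + s • v) - f x - ⟪g, v⟫ * s - (1 / 2) * B v v * s ^ 2)
      =o[𝓝 0] fun s => s ^ 2 := by
  have hray : Tendsto (fun s : ℝ => s • v) (𝓝 0) (𝓝 0) := by
    simpa using (tendsto_id (x := 𝓝 (0 : ℝ))).smul_const v
  have hnorm : (fun s : ℝ => ‖s • v‖ ^ 2) = fun s => ‖v‖ ^ 2 * s ^ 2 := by
    ext s
    rw [norm_smul, Real.norm_eq_abs, mul_pow, sq_abs, mul_comm]
  refine ((hf.comp_tendsto hray).trans_isBigO ?_).congr_left fun s => ?_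
  · simpa only [Function.comp_def, hnorm] using (isBigO_refl (fun s : ℝ => s ^ 2) _).const_mul_left _
  · simp only [Function.comp_apply, inner_smul_right, map_smul, smul_apply, smul_eq_mul]
    ring

end SecondOrderExpansion

theorem eventually_pos_of_isLittleO_sq {φ : ℝ → ℝ} {a b : ℝ}
    (hφ : (fun s => φ s - a * s - (1 / 2) * b * s ^ 2) =o[𝓝 0] fun s => s ^ 2)
    (ha : 0 ≤ a) (hb : 0 < b) : ∀ᶠ s in 𝓝[>] 0, 0 < φ s := by
  have hsmall := hφ.def (by positivity : 0 < b / 4)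
  filter_upwards [nhdsWithin_le_nhds hsmall, self_mem_nhdsWithin] with s hs (hpos : 0 < s)
  rw [Real.norm_eq_abs, Real.norm_eq_abs, abs_of_nonneg (sq_nonneg s)] at hs
  have hrem := (abs_le.1 hs).1
  nlinarith [mul_nonneg ha hpos.le, pow_pos hpos 2]

theorem exists_pos_forall_lt_of_eventually_nhdsGT {p : ℝ → Prop} (hp : ∀ᶠ s in 𝓝[>] 0, p s) :
    ∃ ε > (0 : ℝ), ∀ s : ℝ, 0 < s → s < ε → p s := by
  obtain ⟨ε, hε, hsub⟩ := mem_nhdsGT_iff_exists_Ioo_subset.1 hp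
  exact ⟨ε, hε, fun s hs hsε => hsub ⟨hs, hsε⟩⟩

theorem pruning_worse_under_noise_asymptotic_general
    (D : ℕ) (θ v gt gn : EuclideanSpace ℝ (Fin D))
    (Lt Ln : EuclideanSpace ℝ (Fin D) → ℝ)
    (Bt Bn : EuclideanSpace ℝ (Fin D) →L[ℝ] EuclideanSpace ℝ (Fin D) →L[ℝ] ℝ)
    (hLt : (fun h : EuclideanSpace ℝ (Fin D) =>
        Lt (θ + h) - Lt θ - (inner ℝ gt h : ℝ) - (1 / 2) * Bt h h)
      =o[nhds 0] fun h => ‖h‖ ^ 2)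
    (hLn : (fun h : EuclideanSpace ℝ (Fin D) =>
        Ln (θ + h) - Ln θ - (inner ℝ gn h : ℝ) - (1 / 2) * Bn h h)
      =o[nhds 0] fun h => ‖h‖ ^ 2)
    (hgt : gt = 0)
    (hgn : (0 : ℝ) ≤ inner ℝ gn v)
    (hB : 0 < Bn v v - Bt v v) :
    ∃ ε > (0 : ℝ), ∀ s : ℝ, 0 < s → s < ε →
      Ln θ - Lt θ < Ln (θ + s • v) - Lt (θ + s • v) := by
  subst hgt
  have hgap : HasSecondOrderExpansionAt (Ln - Lt) θ (gn - 0) (Bn - Bt) :=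
    HasSecondOrderExpansionAt.sub hLn hLt
  have hpos := eventually_pos_of_isLittleO_sq (hgap.comp_ray v) (by simpa using hgn) hB
  obtain ⟨ε, hε, hsmall⟩ := exists_pos_forall_lt_of_eventually_nhdsGT hpos
  exact ⟨ε, hε, fun s hs hsε => sub_pos.1 (hsmall s hs hsε)⟩

/-- Proposition 1 (Pruning is Worse under Noise), asymptotic directional form:
suppose `gᵗ = 0`, and let `v` be a direction with `⟨gⁿ, v⟩ ≥ 0` and
`Bⁿ(v, v) − Bᵗ(v, v) > 0`. Then there exists `ε > 0` such that for every `s` with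
`0 < s < ε`, the loss gap strictly increases after the pruning perturbation `s • v`. -/
theorem pruning_worse_under_noise_asymptotic
    (D : ℕ) (θ v gt gn : EuclideanSpace ℝ (Fin D))
    (Lt Ln : EuclideanSpace ℝ (Fin D) → ℝ)
    (Bt Bn : EuclideanSpace ℝ (Fin D) →L[ℝ] EuclideanSpace ℝ (Fin D) →L[ℝ] ℝ)
    (hBt_symm : ∀ x y, Bt x y = Bt y x)
    (hBn_symm : ∀ x y, Bn x y = Bn y x)
    (hLt : (fun h : EuclideanSpace ℝ (Fin D) =>
        Lt (θ + h) - Lt θ - (inner ℝ gt h : ℝ) - (1 / 2) * Bt h h)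
      =o[nhds 0] fun h => ‖h‖ ^ 2)
    (hLn : (fun h : EuclideanSpace ℝ (Fin D) =>
        Ln (θ + h) - Ln θ - (inner ℝ gn h : ℝ) - (1 / 2) * Bn h h)
      =o[nhds 0] fun h => ‖h‖ ^ 2)
    (hgt : gt = 0)
    (hgn : (0 : ℝ) ≤ inner ℝ gn v)
    (hB : 0 < Bn v v - Bt v v) :
    ∃ ε > (0 : ℝ), ∀ s : ℝ, 0 < s → s < ε →
      Ln θ - Lt θ < Ln (θ + s • v) - Lt (θ + s • v) :=
  pruning_worse_under_noise_asymptotic_general D θ v gt gn Lt Ln Bt Bn hLt hLn hgt hgn hB
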